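/- arXiv:1511.01616 — 4 statements merged into one kernel-verified Lean document; each statement's English description precedes it below -/
import Mathlib

section
/- Let q be an odd prime power of the form q = 2am + 1 for positive integers a, m. Then for every integer b with 1 ≤ b ≤ 2a and every integer s with 1 ≤ s ≤ (a+1)m, there exists a linear code C over 𝔽_{q²} of length n = b(q²−1)/(2a), dimension n − s, and minimum distance s + 1, such that C^{⊥H} ⊆ C. -/
/-!
Let `g` generate `F_{q²}^×`, `M = am + 1`, `n' = 2mM = (q² - 1)/(2a)` and
`e = 2m - 1 - 2(s - M)` (so `e = 2m - 1` when `s ≤ M`). The code is the kernel of the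
`s × n` matrix `(u_i α_i^j)`, i.e. the dual of a generalized Reed–Solomon code, with points
`α_{r,t} = g^(r + 2at)` on `b` cosets of the subgroup of order `n'` and multipliers
`u_{r,t} = g^(aet)` (`r < b`, `t < n'`). A nonzero codeword of weight at most `s` is killed by
a Lagrange basis polynomial, so the code is MDS: dimension `n - s`, distance `s + 1`.
It contains its Hermitian dual once its parity-check rows are Hermitian-orthogonal,
`∑ u_i^(q+1) α_i^(qj+l) = 0` for `j, l < s`; this sum splits into geometric sums of an
`n'`-th root of unity raised to `Me + qj + l`, which vanish as `n' ∤ Me + qj + l`.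
-/

noncomputable def wt {F : Type*} [Zero F] {n : ℕ} (x : Fin n → F) : ℕ :=
  Set.ncard {i | x i ≠ 0}

noncomputable def dualH {F : Type*} [Field F] (q n : ℕ) (C : Submodule F (Fin n → F)) :
    Submodule F (Fin n → F) where
  carrier := {x | ∀ y ∈ C, ∑ i, x i * (y i) ^ q = 0}
  add_mem' := by
    intro a b ha hb y hy
    simp only [Set.mem_setOf_eq] at *
    simp [add_mul, Finset.sum_add_distrib, ha y hy, hb y hy]
  zero_mem' := by
    intro y hy; simp
  smul_mem' := by
    intro c x hx y hy
    simp only [Set.mem_setOf_eq] at *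
    simp [smul_eq_mul, mul_assoc, ← Finset.mul_sum, hx y hy]

open Finset Polynomial

section Weight

variable {M : Type*} [Zero M] {n : ℕ}

lemma wt_eq_card_filter [DecidableEq M] (x : Fin n → M) : wt x = #{i | x i ≠ 0} := by
  rw [wt, ← Set.ncard_coe_finset, coe_filter]
  simp only [mem_univ, true_and]

lemma wt_le_of_forall_le_eq_zero {x : Fin n → M} {k : ℕ} (h : ∀ i : Fin n, k ≤ i → x i = 0) :
    wt x ≤ k := by
  classical
  calc wt x = #{i | x i ≠ 0} := wt_eq_card_filter x
    _ ≤ #{i : Fin n | i < k} := card_le_card fun i hi => by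
        simp only [mem_filter, mem_univ, true_and] at hi ⊢
        exact lt_of_not_ge fun hk => hi (h i hk)
    _ ≤ k := by rw [Fin.card_filter_val_lt]; exact min_le_right n k

end Weight

lemma finrank_le_sub_of_forall_eq_zero {F : Type*} [Field F] {n : ℕ}
    (C : Submodule F (Fin n → F)) (k : ℕ)
    (h : ∀ x ∈ C, (∀ i : Fin n, k ≤ i → x i = 0) → x = 0) :
    Module.finrank F C ≤ n - k := by
  let drop : C →ₗ[F] (Fin (n - k) → F) :=
    LinearMap.pi (fun j => LinearMap.proj ⟨k + j, by omega⟩) ∘ₗ C.subtype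
  have hdrop : Function.Injective drop := by
    refine (injective_iff_map_eq_zero drop).2 fun x hx => Subtype.ext (h x x.2 fun i hi => ?_)
    have := congrFun hx ⟨i - k, by omega⟩
    simp only [drop, LinearMap.comp_apply, LinearMap.pi_apply, LinearMap.proj_apply] at this
    simpa [Nat.add_sub_cancel' hi] using this
  simpa using LinearMap.finrank_le_finrank_of_injective hdrop

section DualGRS

variable {F : Type*} [Field F] {n s : ℕ} {α u : Fin n → F}

def dualGRS (s : ℕ) (α u : Fin n → F) : Submodule F (Fin n → F) :=
  LinearMap.ker (Matrix.of fun (j : Fin s) (i : Fin n) => u i * α i ^ (j : ℕ)).mulVecLin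

lemma mem_dualGRS {x : Fin n → F} :
    x ∈ dualGRS s α u ↔ ∀ j < s, ∑ i, u i * α i ^ j * x i = 0 := by
  simp only [dualGRS, LinearMap.mem_ker, Matrix.mulVecLin_apply, funext_iff, Matrix.mulVec,
    dotProduct, Matrix.of_apply, Pi.zero_apply]
  exact ⟨fun h j hj => h ⟨j, hj⟩, fun h j => h j j.2⟩

lemma sum_mul_eval_eq_zero_of_mem_dualGRS {x : Fin n → F} (hx : x ∈ dualGRS s α u)
    {p : F[X]} (hp : p.natDegree < s) : ∑ i, u i * x i * p.eval (α i) = 0 := by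
  calc ∑ i, u i * x i * p.eval (α i)
      = ∑ j ∈ range s, p.coeff j * ∑ i, u i * α i ^ j * x i := by
        simp_rw [eval_eq_sum_range' hp, mul_sum]
        rw [sum_comm]
        exact sum_congr rfl fun j _ => sum_congr rfl fun i _ => by ring
    _ = 0 := sum_eq_zero fun j hj => by rw [mem_dualGRS.1 hx j (mem_range.1 hj), mul_zero]

lemma lt_wt_of_mem_dualGRS (hα : Function.Injective α) (hu : ∀ i, u i ≠ 0)
    {x : Fin n → F} (hx : x ∈ dualGRS s α u) (hx0 : x ≠ 0) : s < wt x := by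
  classical
  by_contra! hwt
  obtain ⟨i₀, hi₀⟩ : ∃ i, x i ≠ 0 := Function.ne_iff.1 hx0
  set T : Finset (Fin n) := {i | x i ≠ 0}
  have hi₀T : i₀ ∈ T := by simpa [T] using hi₀
  have hT : #T ≤ s := wt_eq_card_filter x ▸ hwt
  have hdeg : (Lagrange.basis T α i₀).natDegree < s := by
    rw [Lagrange.natDegree_basis hα.injOn hi₀T]
    have := card_pos.2 ⟨i₀, hi₀T⟩
    omega
  -- the Lagrange basis polynomial at `i₀` isolates the single coordinate `x i₀`
  have hsum := sum_mul_eval_eq_zero_of_mem_dualGRS hx hdeg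
  rw [sum_eq_single i₀ (fun i _ hi => ?_) (by simp), Lagrange.eval_basis_self hα.injOn hi₀T,
    mul_one] at hsum
  · exact mul_ne_zero (hu i₀) hi₀ hsum
  by_cases hiT : i ∈ T
  · rw [Lagrange.eval_basis_of_ne hi.symm hiT, mul_zero]
  · rw [show x i = 0 by simpa [T] using hiT, mul_zero, zero_mul]

lemma finrank_dualGRS (hα : Function.Injective α) (hu : ∀ i, u i ≠ 0) (hs : s ≤ n) :
    Module.finrank F (dualGRS s α u) = n - s := by
  refine le_antisymm (finrank_le_sub_of_forall_eq_zero _ s fun x hx hsupp => ?_) ?_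
  · by_contra hx0
    exact (lt_wt_of_mem_dualGRS hα hu hx hx0).not_ge (wt_le_of_forall_le_eq_zero hsupp)
  · have hrank := LinearMap.finrank_range_add_finrank_ker
      (Matrix.of fun (j : Fin s) (i : Fin n) => u i * α i ^ (j : ℕ)).mulVecLin
    have hrange := Submodule.finrank_le (LinearMap.range
      (Matrix.of fun (j : Fin s) (i : Fin n) => u i * α i ^ (j : ℕ)).mulVecLin)
    simp only [Module.finrank_fin_fun] at hrank hrange
    rw [dualGRS]
    omega

lemma isLeast_wt_dualGRS (hα : Function.Injective α) (hu : ∀ i, u i ≠ 0) (hs : s < n) :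
    IsLeast {d | ∃ x ∈ dualGRS s α u, x ≠ 0 ∧ wt x = d} (s + 1) := by
  refine ⟨?_, fun d ⟨x, hx, hx0, hd⟩ => hd ▸ lt_wt_of_mem_dualGRS hα hu hx hx0⟩
  -- by the dimension count, some nonzero codeword vanishes outside the first `s + 1` coordinates
  have hdim := finrank_dualGRS hα hu hs.le
  obtain ⟨x, hx, hsupp, hx0⟩ : ∃ x ∈ dualGRS s α u, (∀ i : Fin n, s + 1 ≤ i → x i = 0) ∧ x ≠ 0 := by
    by_contra! h
    have := finrank_le_sub_of_forall_eq_zero _ (s + 1) h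
    omega
  exact ⟨x, hx, hx0, le_antisymm (wt_le_of_forall_le_eq_zero hsupp)
    (lt_wt_of_mem_dualGRS hα hu hx hx0)⟩

lemma dualH_le_dualGRS [Fintype F] {q : ℕ} (hF : Fintype.card F = q ^ 2)
    (h : ∀ j < s, ∀ l < s, ∑ i, u i ^ (q + 1) * α i ^ (q * j + l) = 0) :
    dualH q n (dualGRS s α u) ≤ dualGRS s α u := by
  intro x hx
  refine mem_dualGRS.2 fun j hj => ?_
  -- the Frobenius twist `y` of the `j`-th parity-check row lies in the code
  set y : Fin n → F := fun i => (u i * α i ^ j) ^ q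
  have hy : y ∈ dualGRS s α u := mem_dualGRS.2 fun l hl => by
    rw [← h j hj l hl]
    refine sum_congr rfl fun i _ => ?_
    simp only [y]
    ring
  have hyq (i : Fin n) : y i ^ q = u i * α i ^ j := by
    rw [← pow_mul, ← sq, ← hF, FiniteField.pow_card]
  rw [← hx y hy]
  exact sum_congr rfl fun i _ => by rw [hyq]; ring

end DualGRS

lemma not_dvd_hermitian_exponent {a m s j l : ℕ} (ha : 0 < a) (hm : 0 < m) (hs : s ≤ (a + 1) * m)
    (hj : j < s) (hl : l < s) :
    ¬ 2 * m * (a * m + 1) ∣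
      (a * m + 1) * (2 * m - 1 - 2 * (s - (a * m + 1))) + (2 * a * m + 1) * j + l := by
  rintro ⟨c, hc⟩
  obtain ⟨M, hM⟩ : ∃ M, M = a * m + 1 := ⟨_, rfl⟩
  obtain ⟨d, hd⟩ : ∃ d, d = s - M := ⟨_, rfl⟩
  obtain ⟨e, he⟩ : ∃ e, e = 2 * m - 1 - 2 * d := ⟨_, rfl⟩
  rw [← hM, ← hd, ← he, show 2 * a * m + 1 = 2 * M - 1 by rw [hM, mul_assoc]; omega] at hc
  rw [add_one_mul] at hs
  have hmM : m < M := by nlinarith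
  have hdm : d < m := by omega
  have he' : (e : ℤ) + 2 * d + 1 = 2 * m := by omega
  zify [show 1 ≤ 2 * M by omega] at hc
  -- modulo `M` we have `q ≡ -1`, so `l - j = M * w`, where `w` is odd
  obtain ⟨w, hw⟩ : ∃ w : ℤ, w = 2 * (m * c) - e - 2 * j := ⟨_, rfl⟩
  have hlj : (l : ℤ) - j = M * w := by rw [hw]; linear_combination hc
  have hw1 : w < 2 := by nlinarith
  have hw2 : -2 < w := by nlinarith
  obtain rfl | rfl : w = 1 ∨ w = -1 := by omega
  · have hjd : j < d := by omega
    have h : 2 * (m * (1 - c) : ℤ) = 2 * (d - j) := by linear_combination hw - he'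
    rcases Nat.eq_zero_or_pos c with rfl | hc0
    · omega
    · nlinarith
  · have hld : l < d := by omega
    have h : 2 * (m * (1 + a - c) : ℤ) = 2 * (d - l) := by
      have hM' : (M : ℤ) = a * m + 1 := by exact_mod_cast hM
      have hjl : (j : ℤ) = l + M := by omega
      linear_combination hw - he' - 2 * hjl - 2 * hM'
    rcases le_or_gt c a with hca | hca <;> nlinarith

lemma exists_isPrimitiveRoot_card_sub_one (F : Type*) [Field F] [Fintype F] :
    ∃ g : F, IsPrimitiveRoot g (Fintype.card F - 1) := by
  classical
  obtain ⟨g, hg⟩ := IsCyclic.exists_ofOrder_eq_natCard (α := Fˣ)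
  refine ⟨g, IsPrimitiveRoot.coe_units_iff.2 ?_⟩
  rw [← Fintype.card_units, ← Nat.card_eq_fintype_card, ← hg]
  exact IsPrimitiveRoot.orderOf g

section Construction

variable {F : Type*} [Field F]

lemma IsPrimitiveRoot.geom_sum_pow_eq_zero {β : F} {N c : ℕ} (hβ : IsPrimitiveRoot β N)
    (hc : ¬ N ∣ c) : ∑ t ∈ range N, (β ^ c) ^ t = 0 := by
  rw [geom_sum_eq (mt (hβ.pow_eq_one_iff_dvd c).1 hc), ← pow_mul, mul_comm, pow_mul,
    hβ.pow_eq_one, one_pow, sub_self, zero_div]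

lemma IsPrimitiveRoot.injective_pow_add_mul {g : F} {b c N : ℕ} (hg : IsPrimitiveRoot g (c * N))
    (hb : b ≤ c) : Function.Injective fun p : Fin b × Fin N => g ^ (p.1 + c * p.2 : ℕ) := by
  have hlt (p : Fin b × Fin N) : (p.1 + c * p.2 : ℕ) < c * N := by
    nlinarith [p.1.2, p.2.2]
  intro p p' h
  have h' := hg.pow_inj (hlt p) (hlt p') h
  have hc : 0 < c := Nat.pos_of_ne_zero fun h => by simpa [h] using hlt p
  have h1 : (p.1 : ℕ) = p'.1 := by
    simpa [Nat.add_mul_mod_self_left, Nat.mod_eq_of_lt (p.1.2.trans_le hb),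
      Nat.mod_eq_of_lt (p'.1.2.trans_le hb)] using congrArg (· % c) h'
  have h2 : (p.2 : ℕ) = p'.2 := by
    rw [h1] at h'
    exact Nat.eq_of_mul_eq_mul_left hc (Nat.add_left_cancel h')
  exact Prod.ext (Fin.ext h1) (Fin.ext h2)

lemma sum_mul_pow_pow_eq_zero {ι : Type*} [Fintype ι] {β : F} {N D : ℕ}
    (hβ : IsPrimitiveRoot β N) (hD : ¬ N ∣ D) (f : ι → F) :
    ∑ p : ι × Fin N, f p.1 * (β ^ D) ^ (p.2 : ℕ) = 0 := by
  rw [Fintype.sum_prod_type]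
  refine sum_eq_zero fun r _ => ?_
  dsimp only
  rw [← mul_sum, Fin.sum_univ_eq_sum_range (fun t => (β ^ D) ^ t), hβ.geom_sum_pow_eq_zero hD,
    mul_zero]

lemma exists_hermitian_grs_parameters {q a m b s : ℕ} (ha : 0 < a) (hm : 0 < m)
    (hq : q = 2 * a * m + 1) (hb : b ≤ 2 * a) (hs : s ≤ (a + 1) * m) {g : F}
    (hg : IsPrimitiveRoot g (2 * a * (2 * m * (a * m + 1)))) :
    ∃ α u : Fin b × Fin (2 * m * (a * m + 1)) → F, Function.Injective α ∧ (∀ p, u p ≠ 0) ∧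
      ∀ j < s, ∀ l < s, ∑ p, u p ^ (q + 1) * α p ^ (q * j + l) = 0 := by
  set M := a * m + 1
  set e := 2 * m - 1 - 2 * (s - M)
  refine ⟨fun p => g ^ (p.1 + 2 * a * p.2 : ℕ), fun p => g ^ (a * e * p.2),
    hg.injective_pow_add_mul hb, fun p => pow_ne_zero _ (hg.ne_zero (by positivity)),
    fun j hj l hl => ?_⟩
  have hterm (p : Fin b × Fin (2 * m * M)) :
      (g ^ (a * e * p.2)) ^ (q + 1) * (g ^ (p.1 + 2 * a * p.2 : ℕ)) ^ (q * j + l)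
        = g ^ ((p.1 : ℕ) * (q * j + l)) * ((g ^ (2 * a)) ^ (M * e + q * j + l)) ^ (p.2 : ℕ) := by
    simp only [← pow_mul, ← pow_add]
    congr 1
    simp only [M, hq]
    ring
  rw [sum_congr rfl fun p _ => hterm p]
  refine sum_mul_pow_pow_eq_zero (hg.pow (by positivity) rfl) ?_
    fun r : Fin b => g ^ ((r : ℕ) * (q * j + l))
  simpa only [M, e, hq] using not_dvd_hermitian_exponent ha hm hs hj hl

end Construction

theorem stmt_6_general (q a m : ℕ) (ha : 0 < a) (hm : 0 < m) (hq : q = 2 * a * m + 1)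
    (F : Type*) [Field F] [Fintype F] (hF : Fintype.card F = q ^ 2)
    (b s : ℕ) (hb1 : 1 ≤ b) (hb2 : b ≤ 2 * a) (hs2 : s ≤ (a + 1) * m) :
    ∃ C : Submodule F (Fin (b * (q ^ 2 - 1) / (2 * a)) → F),
      dualH q (b * (q ^ 2 - 1) / (2 * a)) C ≤ C ∧
      Module.finrank F C = (b * (q ^ 2 - 1) / (2 * a)) - s ∧
      IsLeast {d : ℕ | ∃ x ∈ C, x ≠ 0 ∧ wt x = d} (s + 1) := by
  set N := 2 * m * (a * m + 1)
  have hord : q ^ 2 - 1 = 2 * a * N := by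
    rw [hq, Nat.sub_eq_of_eq_add]; ring
  have hlen : b * (q ^ 2 - 1) / (2 * a) = b * N :=
    Nat.div_eq_of_eq_mul_left (by positivity) (by rw [hord]; ring)
  have hsN : s < b * N :=
    calc s ≤ (a + 1) * m := hs2
      _ < N := by simp only [N]; nlinarith
      _ ≤ b * N := Nat.le_mul_of_pos_left N hb1
  rw [hlen]
  obtain ⟨g, hg⟩ := exists_isPrimitiveRoot_card_sub_one F
  rw [hF, hord] at hg
  obtain ⟨α, u, hα, hu, hsum⟩ := exists_hermitian_grs_parameters ha hm hq hb2 hs2 hg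
  let σ := (finProdFinEquiv (m := b) (n := N)).symm
  refine ⟨dualGRS s (α ∘ σ) (u ∘ σ), dualH_le_dualGRS hF fun j hj l hl => ?_,
    finrank_dualGRS (hα.comp σ.injective) (fun i => hu _) hsN.le,
    isLeast_wt_dualGRS (hα.comp σ.injective) (fun i => hu _) hsN⟩
  rw [← hsum j hj l hl]
  exact σ.sum_comp fun p => u p ^ (q + 1) * α p ^ (q * j + l)

/-- Theorem on Hermitian dual-containing GRS codes, case q = 2am+1:
there exists an [n, n−s, s+1]_{q²} Hermitian dual-containing code with
n = b(q²−1)/(2a), for 1 ≤ b ≤ 2a and 1 ≤ s ≤ (a+1)m. -/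
theorem stmt_6 (q a m : ℕ) (ha : 0 < a) (hm : 0 < m) (hq : q = 2 * a * m + 1)
    (hodd : Odd q) (hpp : IsPrimePow q)
    (F : Type*) [Field F] [Fintype F] (hF : Fintype.card F = q ^ 2)
    (b s : ℕ) (hb1 : 1 ≤ b) (hb2 : b ≤ 2 * a) (hs1 : 1 ≤ s) (hs2 : s ≤ (a + 1) * m) :
    ∃ C : Submodule F (Fin (b * (q ^ 2 - 1) / (2 * a)) → F),
      dualH q (b * (q ^ 2 - 1) / (2 * a)) C ≤ C ∧
      Module.finrank F C = (b * (q ^ 2 - 1) / (2 * a)) - s ∧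
      IsLeast {d : ℕ | ∃ x ∈ C, x ≠ 0 ∧ wt x = d} (s + 1) :=
  stmt_6_general q a m ha hm hq F hF b s hb1 hb2 hs2
end

section
/- Let q be an odd prime power of the form q = 2am − 1 for positive integers a, m. Then for every integer b with 1 ≤ b ≤ 2a and every integer s with 1 ≤ s ≤ (a+1)m − 2, there exists a linear code C over 𝔽_{q²} of length n = b(q²−1)/(2a), dimension n − s, and minimum distance s + 1, such that C^{⊥H} ⊆ C. -/
lemma mem_dualH' {F : Type*} [Field F] {q n : ℕ} {C : Submodule F (Fin n → F)}
    {x : Fin n → F} : x ∈ dualH q n C ↔ ∀ y ∈ C, ∑ i, x i * (y i) ^ q = 0 := Iff.rfl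

open Classical in
lemma wt_eq_card {F : Type*} [Zero F] {n : ℕ} (x : Fin n → F) :
    wt x = (Finset.univ.filter (fun i => x i ≠ 0)).card := by
  rw [wt, Set.ncard_eq_toFinset_card']
  congr 1
  ext i
  simp

/-- The parity-check linear map of the code. -/
noncomputable def Tmap {F : Type*} [Field F] {n : ℕ} (s : ℕ) (Wt v : Fin n → F) :
    (Fin n → F) →ₗ[F] (Fin s → F) where
  toFun := fun x => fun t => ∑ i, Wt i * v i ^ (t : ℕ) * x i
  map_add' := by
    intro x y; funext t
    simp [mul_add, Finset.sum_add_distrib]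
  map_smul' := by
    intro c x; funext t
    simp only [Pi.smul_apply, smul_eq_mul, RingHom.id_apply]
    rw [Finset.mul_sum]
    exact Finset.sum_congr rfl fun i _ => by ring

lemma Tmap_apply {F : Type*} [Field F] {n : ℕ} (s : ℕ) (Wt v : Fin n → F)
    (x : Fin n → F) (t : Fin s) :
    Tmap s Wt v x t = ∑ i, Wt i * v i ^ (t : ℕ) * x i := rfl

open Polynomial in
lemma moments {F : Type*} [Field F] {n s : ℕ} (v : Fin n → F) (hv : Function.Injective v)
    (W : Fin n → F) (hW : ∀ i, W i ≠ 0) (x : Fin n → F)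
    (hx : ∀ t : Fin s, ∑ i, W i * v i ^ (t : ℕ) * x i = 0)
    (hwt : wt x ≤ s) : x = 0 := by
  classical
  by_contra h0
  obtain ⟨i0, hi0⟩ : ∃ i0, x i0 ≠ 0 := by
    by_contra h; push_neg at h; exact h0 (funext h)
  set Sf : Finset (Fin n) := Finset.univ.filter (fun i => x i ≠ 0) with hSf
  have hi0m : i0 ∈ Sf := by simp [hSf, hi0]
  have hcard : Sf.card ≤ s := by rw [wt_eq_card] at hwt; exact hwt
  set Su : Finset (Fin n) := Sf.erase i0 with hSu
  set f : F[X] := ∏ j ∈ Su, (X - C (v j)) with hf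
  have hdeg : f.natDegree < s := by
    have h1 : f.natDegree = Su.card := by
      rw [hf, natDegree_prod]
      · simp
      · intro j _; exact X_sub_C_ne_zero _
    have h2 : Su.card = Sf.card - 1 := Finset.card_erase_of_mem hi0m
    have h3 : 1 ≤ Sf.card := Finset.card_pos.mpr ⟨i0, hi0m⟩
    omega
  have hsum : ∑ i, W i * f.eval (v i) * x i = 0 := by
    have heval : ∀ i, f.eval (v i) = ∑ t ∈ Finset.range s, f.coeff t * v i ^ t := by
      intro i; exact eval_eq_sum_range' hdeg (v i)
    calc ∑ i, W i * f.eval (v i) * x i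
        = ∑ i, ∑ t ∈ Finset.range s, f.coeff t * (W i * v i ^ t * x i) := by
          refine Finset.sum_congr rfl fun i _ => ?_
          rw [heval i, Finset.mul_sum, Finset.sum_mul]
          refine Finset.sum_congr rfl fun t _ => by ring
      _ = ∑ t ∈ Finset.range s, f.coeff t * ∑ i, W i * v i ^ t * x i := by
          rw [Finset.sum_comm]
          refine Finset.sum_congr rfl fun t _ => by rw [Finset.mul_sum]
      _ = 0 := by
          refine Finset.sum_eq_zero fun t htm => ?_
          have := hx ⟨t, Finset.mem_range.mp htm⟩
          simp only [Fin.val_mk] at this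
          rw [this, mul_zero]
  rw [Finset.sum_eq_single i0] at hsum
  · have hprod : f.eval (v i0) ≠ 0 := by
      rw [hf, eval_prod]
      refine Finset.prod_ne_zero_iff.mpr fun j hj => ?_
      have : j ≠ i0 := Finset.ne_of_mem_erase hj
      simp only [eval_sub, eval_X, eval_C]
      exact sub_ne_zero.mpr fun he => this (hv he).symm
    exact hi0 (by
      rcases mul_eq_zero.mp hsum with h | h
      · rcases mul_eq_zero.mp h with h' | h'
        · exact absurd h' (hW i0)
        · exact absurd h' hprod
      · exact h)
  · intro j _ hj
    by_cases hxj : x j = 0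
    · rw [hxj, mul_zero]
    · have hjm : j ∈ Su := Finset.mem_erase.mpr ⟨hj, by simp [hSf, hxj]⟩
      have : f.eval (v j) = 0 := by
        rw [hf, eval_prod]
        exact Finset.prod_eq_zero hjm (by simp)
      rw [this, mul_zero, zero_mul]
  · intro h; exact absurd (Finset.mem_univ i0) h

lemma NTZ (a m s t t' k : ℤ) (ha : 1 ≤ a) (hm : 1 ≤ m)
    (hs2 : s + 2 ≤ (a+1)*m) (ht0 : 0 ≤ t) (ht : t < s) (ht'0 : 0 ≤ t') (ht' : t' < s)
    (hk : (2*a*m-1)*t + t' + (2*a-1)*m = (2*a*m-2)*m*k) : False := by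
  have ham : 1 ≤ a*m := by nlinarith
  have hN : 0 ≤ (2*a*m-2)*m := by nlinarith
  have hq1 : 1 ≤ 2*a*m - 1 := by nlinarith
  have hdm : m ≤ (2*a-1)*m := by nlinarith
  have htq : 0 ≤ (2*a*m-1)*t := mul_nonneg (by linarith) ht0
  have hk1 : 1 ≤ k := by
    by_contra h
    push_neg at h
    have : (2*a*m-2)*m*k ≤ 0 := mul_nonpos_of_nonneg_of_nonpos hN (by omega)
    linarith
  have hkm : m ≤ k*m := by nlinarith
  set u : ℤ := k*m - t with hu
  have h1 : (2*a*m-1)*u = k*m + t' + (2*a-1)*m := by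
    rw [hu]; linear_combination -hk
  have hu1 : 1 ≤ u := by
    by_contra h
    push_neg at h
    have : (2*a*m-1)*u ≤ 0 := mul_nonpos_of_nonneg_of_nonpos (by linarith) (by omega)
    linarith
  have hts : t ≤ (a+1)*m - 3 := by linarith
  have ht's : t' ≤ (a+1)*m - 3 := by linarith
  have htu : t = k*m - u := by omega
  have hu2 : u ≤ 2 := by
    by_contra h
    push_neg at h
    have h3 : (2*a*m-2)*3 ≤ (2*a*m-2)*u := by
      apply mul_le_mul_of_nonneg_left (by omega) (by nlinarith)
    nlinarith [mul_le_mul_of_nonneg_right ha (by linarith : (0:ℤ) ≤ m)]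
  interval_cases u
  · linarith
  · have hkam : a*m + 1 ≤ k*m := by linarith
    have hka : a + 1 ≤ k := by
      by_contra h
      push_neg at h
      have : k*m ≤ a*m := mul_le_mul_of_nonneg_right (by omega) (by linarith)
      linarith
    have : (a+1)*m ≤ k*m := mul_le_mul_of_nonneg_right hka (by linarith)
    linarith

lemma NT (a m s t t' : ℕ) (ha : 1 ≤ a) (hm : 1 ≤ m)
    (hs2 : s + 2 ≤ (a+1)*m) (ht : t < s) (ht' : t' < s) :
    ¬ ((2*a*m-2)*m ∣ (2*a*m-1)*t + t' + (2*a-1)*m) := by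
  rintro ⟨k, hk⟩
  have h2am : 2 ≤ 2*a*m := by nlinarith
  have h1a : 1 ≤ 2*a := by omega
  refine NTZ (a:ℤ) m s t t' k (by exact_mod_cast ha) (by exact_mod_cast hm)
    (by exact_mod_cast hs2) (by positivity) (by exact_mod_cast ht) (by positivity)
    (by exact_mod_cast ht') ?_
  have := congrArg (fun x : ℕ => (x : ℤ)) hk
  have h1am : 1 ≤ 2*a*m := by omega
  push_cast [h2am, h1a, h1am] at this
  linarith


/-- case q = 2am−1:
there exists an [n, n−s, s+1]_{q²} Hermitian dual-containing code with
n = b(q²−1)/(2a), for 1 ≤ b ≤ 2a and 1 ≤ s ≤ (a+1)m − 2. -/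
theorem stmt_8 (q a m : ℕ) (ha : 0 < a) (hm : 0 < m) (hq : q = 2 * a * m - 1)
    (hodd : Odd q) (hpp : IsPrimePow q)
    (F : Type*) [Field F] [Fintype F] (hF : Fintype.card F = q ^ 2)
    (b s : ℕ) (hb1 : 1 ≤ b) (hb2 : b ≤ 2 * a) (hs1 : 1 ≤ s)
    (hs2 : s ≤ (a + 1) * m - 2) :
    ∃ C : Submodule F (Fin (b * (q ^ 2 - 1) / (2 * a)) → F),
      dualH q (b * (q ^ 2 - 1) / (2 * a)) C ≤ C ∧
      Module.finrank F C = (b * (q ^ 2 - 1) / (2 * a)) - s ∧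
      IsLeast {d : ℕ | ∃ x ∈ C, x ≠ 0 ∧ wt x = d} (s + 1) := by
  classical
  -- arithmetic setup
  have hq2 : 2 ≤ q := hpp.two_le
  have hqne2 : q ≠ 2 := by rintro rfl; norm_num [Nat.odd_iff] at hodd
  have hq3 : 3 ≤ q := by omega
  have hP1 : 1 ≤ 2*a*m := Nat.mul_pos (Nat.mul_pos (by norm_num) ha) hm
  have hqm : q + 1 = 2*a*m := by rw [hq, Nat.sub_add_cancel hP1]
  have h2am : 4 ≤ 2*a*m := by omega
  have hs2' : s + 2 ≤ (a+1)*m := by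
    have key : ∀ X : ℕ, s ≤ X - 2 → 1 ≤ s → s + 2 ≤ X := by intro X h1 h2; omega
    exact key _ hs2 hs1
  set N := (q-1)*m with hN
  have hNpos : 0 < N := Nat.mul_pos (by omega) hm
  have hK : q^2 - 1 = 2*a*N := by
    have h1 : q^2 - 1 = (q+1)*(q-1) := by
      have : q^2 - 1^2 = (q+1)*(q-1) := Nat.sq_sub_sq q 1
      simpa using this
    calc q^2 - 1 = (q+1)*(q-1) := h1
      _ = (2*a*m)*(q-1) := by rw [hqm]
      _ = 2*a*((q-1)*m) := by ring
  have hn : b * (q ^ 2 - 1) / (2 * a) = b * N := by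
    rw [hK, show b * (2*a*N) = (2*a) * (b*N) by ring]
    exact Nat.mul_div_cancel_left _ (by positivity)
  rw [hn]
  -- s+1 ≤ N ≤ b*N
  have hsN : s + 1 ≤ N := by
    rcases Nat.lt_or_ge m 2 with hm2 | hm2
    · interval_cases m
      · simp only [mul_one] at hqm hs2' hN ⊢
        omega
    · have h1 : (a+1)*m ≤ 2*a*m := Nat.mul_le_mul_right m (by omega)
      rw [← hqm] at h1
      have h2 : s + 1 ≤ q := by omega
      have h3 : (q-1)*2 ≤ (q-1)*m := Nat.mul_le_mul_left (q-1) hm2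
      rw [hN]; omega
  have hsn : s + 1 ≤ b*N := le_trans hsN (Nat.le_mul_of_pos_left N hb1)
  -- field setup
  have hF2 : Fintype.card Fˣ = q^2 - 1 := by rw [Fintype.card_units, hF]
  obtain ⟨g, hg⟩ := IsCyclic.exists_generator (α := Fˣ)
  have horder : orderOf g = q^2 - 1 := by
    rw [orderOf_eq_card_of_forall_mem_zpowers hg, Nat.card_eq_fintype_card, hF2]
  set γ : F := (g : F) with hγ
  have hγn : γ ≠ 0 := g.ne_zero
  have hγpow : ∀ k : ℕ, ((g ^ k : Fˣ) : F) = γ ^ k := fun k => Units.val_pow_eq_pow_val g k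
  have hγone : ∀ k : ℕ, γ ^ k = 1 ↔ (q^2 - 1) ∣ k := by
    intro k
    constructor
    · intro h
      have : (g ^ k : Fˣ) = 1 := Units.ext (by rw [hγpow k] at *; simpa using h)
      rw [← horder]
      exact orderOf_dvd_iff_pow_eq_one.mpr this
    · intro h
      obtain ⟨c, rfl⟩ := h
      rw [pow_mul, ← hγpow, ← horder, pow_orderOf_eq_one]
      simp
  set e := (finProdFinEquiv : Fin b × Fin N ≃ Fin (b*N)) with he
  set D := 2*a - 1 with hD
  set ep : Fin b × Fin N → ℕ := fun p => (p.1 : ℕ) + 2*a*(p.2 : ℕ) with hep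
  set v : Fin (b*N) → F := fun i => γ ^ ep (e.symm i) with hv
  set Wt : Fin (b*N) → F := fun i => γ ^ (D * ((e.symm i).2 : ℕ)) with hWt
  have hWn : ∀ i, Wt i ≠ 0 := fun i => pow_ne_zero _ hγn
  -- injectivity of v
  have hepbound : ∀ p : Fin b × Fin N, ep p < q^2 - 1 := by
    intro p
    have h1 : (p.1 : ℕ) < b := p.1.isLt
    have h2 : (p.2 : ℕ) < N := p.2.isLt
    have h3 : (p.1 : ℕ) + 1 ≤ 2*a := by omega
    have h4 : 2*a*(p.2 : ℕ) + 2*a ≤ 2*a*N := by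
      rw [show 2*a*(p.2:ℕ) + 2*a = 2*a*((p.2:ℕ)+1) by ring]
      exact Nat.mul_le_mul_left _ (by omega)
    rw [hK]
    simp only [hep]
    omega
  have hepinj : Function.Injective ep := by
    intro p p' hpe
    simp only [hep] at hpe
    have h1 : (p.1 : ℕ) = (p'.1 : ℕ) := by
      have hb' : (p.1 : ℕ) < 2*a := lt_of_lt_of_le p.1.isLt hb2
      have hb'' : (p'.1 : ℕ) < 2*a := lt_of_lt_of_le p'.1.isLt hb2
      have hcongr := congrArg (fun z => z % (2*a)) hpe
      simpa [Nat.add_mul_mod_self_left, Nat.mod_eq_of_lt hb', Nat.mod_eq_of_lt hb''] using hcongr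
    have h2 : (p.2 : ℕ) = (p'.2 : ℕ) := by
      have : 2*a*(p.2:ℕ) = 2*a*(p'.2:ℕ) := by omega
      exact Nat.eq_of_mul_eq_mul_left (by omega) this
    exact Prod.ext (Fin.ext h1) (Fin.ext h2)
  have horderγ : orderOf γ = q^2 - 1 := by rw [hγ, orderOf_units, horder]
  have hvinj : Function.Injective v := by
    intro i i' hii
    simp only [hv] at hii
    have h1 : ep (e.symm i) = ep (e.symm i') := by
      refine pow_injOn_Iio_orderOf ?_ ?_ hii
      · simp only [Set.mem_Iio, horderγ]; exact hepbound _
      · simp only [Set.mem_Iio, horderγ]; exact hepbound _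
    exact e.symm.injective (hepinj h1)
  -- membership characterization of the code
  have hmemC : ∀ x : Fin (b*N) → F, x ∈ LinearMap.ker (Tmap s Wt v) ↔
      ∀ t : Fin s, ∑ i, Wt i * v i ^ (t:ℕ) * x i = 0 := by
    intro x
    rw [LinearMap.mem_ker]
    constructor
    · intro h t
      have := congrFun h t
      rw [Tmap_apply] at this
      simpa using this
    · intro h
      funext t
      rw [Tmap_apply]
      simpa using h t
  -- the character sum computation
  have hchar : ∀ t t' : Fin s,
      ∑ i, Wt i * v i ^ ((t':ℕ)) * ((Wt i * v i ^ (t:ℕ))^q) = 0 := by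
    intro t t'
    set e0 := q*(t:ℕ) + (t':ℕ) with he0
    have hdvdnot : ¬ (N ∣ D*m + e0) := by
      intro hdvd
      apply NT a m s (t:ℕ) (t':ℕ) ha hm hs2' t.isLt t'.isLt
      have hq1 : q - 1 = 2*a*m - 2 := by
        have key : ∀ P : ℕ, q + 1 = P → q - 1 = P - 2 := fun P h => by omega
        exact key _ hqm
      have h' : N ∣ e0 + D*m := by rwa [Nat.add_comm] at hdvd
      rw [hN, hq1, he0, hq, hD] at h'
      exact h'
    have hc1 : γ^(2*a*(D*m+e0)) ≠ 1 := by
      intro hcc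
      have hdvd := (hγone _).mp hcc
      rw [hK] at hdvd
      exact hdvdnot ((Nat.mul_dvd_mul_iff_left (show 0 < 2*a by omega)).mp hdvd)
    have hcN : (γ^(2*a*(D*m+e0)))^N = 1 := by
      rw [← pow_mul, show 2*a*(D*m+e0)*N = (q^2-1)*(D*m+e0) from by rw [hK]; ring]
      exact (hγone _).mpr ⟨_, rfl⟩
    have hgeo : ∑ i2 : Fin N, (γ^(2*a*(D*m+e0)))^(i2:ℕ) = 0 := by
      rw [Fin.sum_univ_eq_sum_range (fun i => (γ^(2*a*(D*m+e0)))^i) N, geom_sum_eq hc1, hcN]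
      simp
    have hterm : ∀ i : Fin (b*N), Wt i * v i ^ ((t':ℕ)) * ((Wt i * v i ^ (t:ℕ))^q)
        = γ ^ (e0*((e.symm i).1:ℕ) + (2*a*(D*m + e0))*((e.symm i).2:ℕ)) := by
      intro i
      simp only [hWt, hv]
      simp only [← pow_mul, ← pow_add]
      congr 1
      simp only [hep, he0]
      have hz : (q:ℤ) + 1 = 2*(a:ℤ)*(m:ℤ) := by exact_mod_cast hqm
      zify
      linear_combination ((D:ℤ)*((e.symm i).2:ℤ))*hz
    have h2 : (∑ i, Wt i * v i ^ ((t':ℕ)) * ((Wt i * v i ^ (t:ℕ))^q))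
        = ∑ i, γ ^ (e0*((e.symm i).1:ℕ) + (2*a*(D*m + e0))*((e.symm i).2:ℕ)) :=
      Finset.sum_congr rfl fun i _ => hterm i
    rw [h2]
    rw [Equiv.sum_comp e.symm (fun p : Fin b × Fin N =>
      γ ^ (e0*(p.1:ℕ) + (2*a*(D*m + e0))*(p.2:ℕ)))]
    rw [Fintype.sum_prod_type]
    refine Finset.sum_eq_zero fun j _ => ?_
    have h5 : (∑ i2 : Fin N, γ ^ (e0*(j:ℕ) + (2*a*(D*m+e0))*(i2:ℕ)))
        = (γ^e0)^(j:ℕ) * ∑ i2 : Fin N, (γ^(2*a*(D*m+e0)))^(i2:ℕ) := by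
      rw [Finset.mul_sum]
      exact Finset.sum_congr rfl fun i2 _ => by rw [pow_add, pow_mul, pow_mul]
    rw [h5, hgeo, mul_zero]
  -- Frobenius squared is identity
  have hfr : ∀ c : F, (c ^ q) ^ q = c := by
    intro c
    rw [← pow_mul, show q*q = Fintype.card F from by rw [hF]; ring, FiniteField.pow_card]
  -- surjectivity of the check map
  have hs_le : s ≤ b*N := by omega
  set ι : Fin s → Fin (b*N) := Fin.castLE hs_le with hι
  have hιinj : Function.Injective ι := Fin.castLE_injective _
  set B : Matrix (Fin s) (Fin s) F :=
    Matrix.of (fun t t' => Wt (ι t') * v (ι t') ^ (t:ℕ)) with hB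
  have hBdet : B.det ≠ 0 := by
    have hBt : B.transpose = Matrix.diagonal (fun t' => Wt (ι t')) *
        Matrix.vandermonde (fun t' => v (ι t')) := by
      ext t' t
      simp [Matrix.transpose_apply, Matrix.diagonal_mul, Matrix.vandermonde, hB]
    have hdet2 : B.det = (∏ t', Wt (ι t')) * (Matrix.vandermonde fun t' => v (ι t')).det := by
      rw [← Matrix.det_transpose B, hBt, Matrix.det_mul, Matrix.det_diagonal]
    rw [hdet2]
    apply mul_ne_zero
    · exact Finset.prod_ne_zero_iff.mpr fun t' _ => hWn _
    · rw [Matrix.det_vandermonde]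
      refine Finset.prod_ne_zero_iff.mpr fun i _ => Finset.prod_ne_zero_iff.mpr fun j hj => ?_
      have hij : i < j := Finset.mem_Ioi.mp hj
      refine sub_ne_zero.mpr fun hvv => ?_
      exact absurd (hιinj (hvinj hvv)) (Fin.ne_of_gt hij)
  have hsurj : Function.Surjective (Tmap s Wt v) := by
    intro y
    set z := B⁻¹.mulVec y with hz
    refine ⟨fun i => ∑ t', if i = ι t' then z t' else 0, ?_⟩
    funext t
    rw [Tmap_apply]
    calc ∑ i, Wt i * v i ^ (t:ℕ) * (∑ t', if i = ι t' then z t' else 0)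
        = ∑ i, ∑ t', (if i = ι t' then Wt i * v i ^ (t:ℕ) * z t' else 0) := by
          refine Finset.sum_congr rfl fun i _ => ?_
          rw [Finset.mul_sum]
          exact Finset.sum_congr rfl fun t' _ => by split <;> simp
      _ = ∑ t', ∑ i, (if i = ι t' then Wt i * v i ^ (t:ℕ) * z t' else 0) := Finset.sum_comm
      _ = ∑ t', Wt (ι t') * v (ι t') ^ (t:ℕ) * z t' := by
          refine Finset.sum_congr rfl fun t' _ => ?_
          rw [Finset.sum_ite_eq' Finset.univ (ι t') (fun i => Wt i * v i ^ (t:ℕ) * z t')]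
          simp
      _ = (B.mulVec z) t := by
          simp [Matrix.mulVec, dotProduct, hB]
      _ = y t := by
          rw [hz, Matrix.mulVec_mulVec,
            Matrix.mul_nonsing_inv _ (isUnit_iff_ne_zero.mpr hBdet), Matrix.one_mulVec]
  -- dimension of the kernel
  have hrank := LinearMap.finrank_range_add_finrank_ker (Tmap s Wt v)
  rw [LinearMap.range_eq_top.mpr hsurj, finrank_top] at hrank
  have hd1 : Module.finrank F (Fin (b*N) → F) = b*N := by simp [Module.finrank_pi]
  have hd2 : Module.finrank F (Fin s → F) = s := by simp [Module.finrank_pi]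
  rw [hd1, hd2] at hrank
  -- minimum weight lower bound
  have hlower : ∀ x' , x' ∈ LinearMap.ker (Tmap s Wt v) → x' ≠ 0 → s + 1 ≤ wt x' := by
    intro x' hx' hxne'
    by_contra hcc
    push_neg at hcc
    exact hxne' (moments v hvinj Wt hWn x' ((hmemC x').mp hx') (by omega))
  -- a codeword of weight exactly s+1
  set ι1 : Fin (s+1) → Fin (b*N) := Fin.castLE hsn with hι1
  have hι1inj : Function.Injective ι1 := Fin.castLE_injective _
  have hni : ¬ Function.Injective (Tmap s (Wt ∘ ι1) (v ∘ ι1)) := by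
    intro hinj
    have hle := LinearMap.finrank_le_finrank_of_injective hinj
    rw [Module.finrank_pi, Module.finrank_pi, Fintype.card_fin, Fintype.card_fin] at hle
    omega
  obtain ⟨z1, z2, hz12, hzne⟩ := Function.not_injective_iff.mp hni
  set z := z1 - z2 with hzdef
  have hz0 : Tmap s (Wt ∘ ι1) (v ∘ ι1) z = 0 := by rw [hzdef, map_sub, hz12, sub_self]
  have hzne0 : z ≠ 0 := sub_ne_zero.mpr hzne
  obtain ⟨t0, ht0⟩ : ∃ t0, z t0 ≠ 0 := by
    by_contra hcc; push_neg at hcc; exact hzne0 (funext hcc)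
  set x := (fun i => ∑ t', if i = ι1 t' then z t' else 0 : Fin (b*N) → F) with hxd
  have hxC : x ∈ LinearMap.ker (Tmap s Wt v) := by
    rw [hmemC]
    intro t
    have hcollapse : ∑ i, Wt i * v i ^ (t:ℕ) * x i
        = ∑ t', Wt (ι1 t') * v (ι1 t') ^ (t:ℕ) * z t' := by
      rw [hxd]
      calc ∑ i, Wt i * v i ^ (t:ℕ) * (∑ t', if i = ι1 t' then z t' else 0)
          = ∑ i, ∑ t', (if i = ι1 t' then Wt i * v i ^ (t:ℕ) * z t' else 0) := by
            refine Finset.sum_congr rfl fun i _ => ?_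
            rw [Finset.mul_sum]
            exact Finset.sum_congr rfl fun t' _ => by split <;> simp
        _ = ∑ t', ∑ i, (if i = ι1 t' then Wt i * v i ^ (t:ℕ) * z t' else 0) := Finset.sum_comm
        _ = ∑ t', Wt (ι1 t') * v (ι1 t') ^ (t:ℕ) * z t' := by
            refine Finset.sum_congr rfl fun t' _ => ?_
            rw [Finset.sum_ite_eq' Finset.univ (ι1 t') (fun i => Wt i * v i ^ (t:ℕ) * z t')]
            simp
    rw [hcollapse]
    have := congrFun hz0 t
    rw [Tmap_apply] at this
    simpa using this
  have hxv : x (ι1 t0) = z t0 := by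
    simp only [hxd]
    rw [Finset.sum_eq_single t0]
    · simp
    · intro t'' _ hne
      exact if_neg fun hh => hne (hι1inj hh.symm)
    · intro hcc; exact absurd (Finset.mem_univ t0) hcc
  have hxne : x ≠ 0 := by
    intro hcc
    apply ht0
    rw [← hxv, hcc]
    simp
  have hwle : wt x ≤ s + 1 := by
    have hsub : {i | x i ≠ 0} ⊆ Set.range ι1 := by
      intro i hi
      by_contra hni2
      apply hi
      rw [hxd]
      exact Finset.sum_eq_zero fun t' _ => if_neg fun hh => hni2 ⟨t', hh.symm⟩
    calc wt x ≤ (Set.range ι1).ncard := Set.ncard_le_ncard hsub (Set.finite_range ι1)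
      _ = s + 1 := by
          rw [← Set.image_univ, Set.ncard_image_of_injective _ hι1inj, Set.ncard_univ,
            Nat.card_eq_fintype_card, Fintype.card_fin]
  -- assemble
  refine ⟨LinearMap.ker (Tmap s Wt v), ?_, ?_, ⟨x, hxC, hxne,
    le_antisymm hwle (hlower x hxC hxne)⟩, ?_⟩
  · -- dual containing
    intro xx hxx
    rw [hmemC]
    intro t
    have hy : (fun i => (Wt i * v i ^ (t:ℕ))^q) ∈ LinearMap.ker (Tmap s Wt v) := by
      rw [hmemC]
      intro t''
      exact hchar t t''
    have hxy := mem_dualH'.mp hxx _ hy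
    have hrw : ∑ i, Wt i * v i ^ (t:ℕ) * xx i
        = ∑ i, xx i * ((Wt i * v i ^ (t:ℕ))^q)^q :=
      Finset.sum_congr rfl fun i _ => by rw [hfr]; ring
    rw [hrw]
    exact hxy
  · -- dimension
    omega
  · -- lower bound of the weight set
    rintro dd ⟨x', hx'1, hx'2, hx'3⟩
    rw [← hx'3]
    exact hlower x' hx'1 hx'2
end

section
/- Let q be a prime power and let 2 ≤ n ≤ q². Suppose n = n_1 + ⋯ + n_t with 1 ≤ t ≤ q and 2 ≤ n_i ≤ q for all 1 ≤ i ≤ t, and let s be an integer with 1 ≤ s ≤ min{n_1,…,n_t}/2. Then there exists a linear code C over 𝔽_{q²} of length n, dimension n − s, and minimum distance s + 1, such that C^{⊥H} ⊆ C. -/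
/-!
Let `K = 𝔽_q ⊆ F` and `θ ∉ K`. Place the `i`-th block of nodes on `θ aᵢ + Sᵢ` with distinct
`aᵢ ∈ K` and `Sᵢ ⊆ K`, `|Sᵢ| = nᵢ`; the blocks lie in distinct cosets of `K`, so all `n` nodes
are distinct. Let `D` be the generalized Reed–Solomon code spanned by the rows `v * β ^ k`,
`k < s`, and `C = D^⊥H`, which is again a generalized Reed–Solomon code, hence MDS with
parameters `[n, n - s, s + 1]`. Choose `v ^ (q + 1)` to be the Lagrange weight
`(∏_{y ≠ x} (x - y))⁻¹` of the node `b + x` inside its block (the norm `F → K` is surjective).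
Since `(b + x) ^ q = b ^ q + x` for `x ∈ K`, the Hermitian product of two rows is, block by block,
`∑ₓ P(x) / ∏_{y ≠ x} (x - y)` for a polynomial `P` of degree `≤ 2s - 2 < nᵢ - 1`, which is the
vanishing coefficient of `X ^ (nᵢ - 1)` in `P`. So `D ⊆ D^⊥H = C`, whence `C^⊥H ⊆ D^⊥H = C`.
-/

open Polynomial Finset Function

section GeneralizedReedSolomon

variable {F : Type*} [Field F] {N : ℕ}

theorem wt_eq_hammingNorm [DecidableEq F] (x : Fin N → F) : wt x = hammingNorm x := by
  rw [wt, hammingNorm, ← Set.ncard_coe_finset, coe_filter]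
  simp

theorem wt_extend_zero_le {r : ℕ} (ι : Fin r → Fin N) (y : Fin r → F) :
    wt (extend ι y 0) ≤ r := by
  classical
  rw [wt_eq_hammingNorm, hammingNorm]
  refine (card_le_card fun j hj => ?_).trans ((card_image_le (s := univ) (f := ι)).trans (by simp))
  by_contra hj'
  simp only [mem_filter, mem_univ, true_and] at hj
  exact hj (extend_apply' _ _ _ (by simpa using hj'))

/-- The parity-check map of the generalized Reed–Solomon code with nodes `β`, column
multipliers `w` and redundancy `s`. -/
noncomputable def grsCheck (s : ℕ) (β w : Fin N → F) : (Fin N → F) →ₗ[F] Fin s → F :=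
  Matrix.mulVecLin (Matrix.of fun (k : Fin s) j => w j * β j ^ (k : ℕ))

theorem grsCheck_apply (s : ℕ) (β w x : Fin N → F) (k : Fin s) :
    grsCheck s β w x k = ∑ j, w j * β j ^ (k : ℕ) * x j :=
  rfl

variable {s : ℕ} {β w : Fin N → F}

theorem sum_mul_eval_mul_eq_zero_of_grsCheck_eq_zero {x : Fin N → F}
    (hx : grsCheck s β w x = 0) {P : F[X]} (hP : P.natDegree < s) :
    ∑ j, w j * P.eval (β j) * x j = 0 :=
  calc ∑ j, w j * P.eval (β j) * x j
      = ∑ k ∈ range s, P.coeff k * ∑ j, w j * β j ^ k * x j := by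
        simp only [eval_eq_sum_range' hP, mul_sum, sum_mul]
        rw [sum_comm]
        exact sum_congr rfl fun k _ => sum_congr rfl fun j _ => by ring
    _ = 0 := sum_eq_zero fun k hk => by
        rw [← grsCheck_apply s β w x ⟨k, mem_range.1 hk⟩, hx, Pi.zero_apply, mul_zero]

theorem eq_zero_of_grsCheck_eq_zero_of_wt_le (hβ : Injective β) (hw : ∀ j, w j ≠ 0)
    {x : Fin N → F} (hx : grsCheck s β w x = 0) (hwt : wt x ≤ s) : x = 0 := by
  classical
  by_contra hx0
  obtain ⟨j₀, hj₀⟩ := ne_iff.1 hx0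
  set T := univ.filter fun j => x j ≠ 0
  have hj₀T : j₀ ∈ T := by simpa [T] using hj₀
  have hT : #T ≤ s := by rwa [wt_eq_hammingNorm] at hwt
  -- Test against the Lagrange basis polynomial of the support, which vanishes off `j₀`.
  have key := sum_mul_eval_mul_eq_zero_of_grsCheck_eq_zero hx
    (P := Lagrange.basis T β j₀) (by
      rw [Lagrange.natDegree_basis hβ.injOn hj₀T]
      have := card_pos.2 ⟨j₀, hj₀T⟩
      omega)
  rw [sum_eq_single j₀ ?_ (by simp), Lagrange.eval_basis_self hβ.injOn hj₀T, mul_one] at key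
  · exact mul_ne_zero (hw j₀) hj₀ key
  · intro j _ hj
    by_cases hxj : x j = 0
    · simp [hxj]
    · rw [Lagrange.eval_basis_of_ne (Ne.symm hj) (by simpa [T] using hxj), mul_zero, zero_mul]

theorem grsCheck_surjective (hβ : Injective β) (hw : ∀ j, w j ≠ 0) (hsN : s ≤ N) :
    Surjective (grsCheck s β w) := by
  set ι := Fin.castLE hsN
  set M := grsCheck s β w ∘ₗ ExtendByZero.linearMap F ι
  have hM : Injective M := by
    rw [← LinearMap.ker_eq_bot, LinearMap.ker_eq_bot']
    intro y hy
    refine extend_injective (Fin.castLE_injective hsN) 0 (.trans ?_ (extend_zero ι).symm)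
    exact eq_zero_of_grsCheck_eq_zero_of_wt_le hβ hw (x := extend ι y 0) hy
      (wt_extend_zero_le ι y)
  intro z
  obtain ⟨y, rfl⟩ := LinearMap.injective_iff_surjective.1 hM z
  exact ⟨_, rfl⟩

theorem finrank_ker_grsCheck (hβ : Injective β) (hw : ∀ j, w j ≠ 0) (hsN : s ≤ N) :
    Module.finrank F (LinearMap.ker (grsCheck s β w)) = N - s := by
  have := (grsCheck s β w).finrank_range_add_finrank_ker
  rw [LinearMap.range_eq_top.2 (grsCheck_surjective hβ hw hsN), finrank_top] at this
  simp only [Module.finrank_fin_fun] at this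
  omega

theorem exists_grsCheck_eq_zero_wt_eq (hβ : Injective β) (hw : ∀ j, w j ≠ 0) (hsN : s < N) :
    ∃ x, grsCheck s β w x = 0 ∧ x ≠ 0 ∧ wt x = s + 1 := by
  set ι := Fin.castLE hsN
  set M := grsCheck s β w ∘ₗ ExtendByZero.linearMap F ι
  obtain ⟨y, hy, hy0⟩ := Submodule.exists_mem_ne_zero_of_ne_bot <|
    LinearMap.ker_ne_bot_of_finrank_lt (f := M) (by simp)
  have hx0 : extend ι y 0 ≠ 0 := fun h =>
    hy0 (extend_injective (Fin.castLE_injective hsN) 0 (h.trans (extend_zero ι).symm))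
  refine ⟨extend ι y 0, hy, hx0, le_antisymm (wt_extend_zero_le ι y) ?_⟩
  by_contra! hwt
  exact hx0 (eq_zero_of_grsCheck_eq_zero_of_wt_le hβ hw hy (by omega))

theorem isLeast_wt_ker_grsCheck (hβ : Injective β) (hw : ∀ j, w j ≠ 0) (hsN : s < N) :
    IsLeast {d | ∃ x ∈ LinearMap.ker (grsCheck s β w), x ≠ 0 ∧ wt x = d} (s + 1) := by
  refine ⟨exists_grsCheck_eq_zero_wt_eq hβ hw hsN, ?_⟩
  rintro d ⟨x, hx, hx0, rfl⟩
  by_contra! hwt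
  exact hx0 (eq_zero_of_grsCheck_eq_zero_of_wt_le hβ hw hx (by omega))

end GeneralizedReedSolomon

section HermitianDual

variable {F : Type*} [Field F] {q n : ℕ}

theorem dualH_anti {C D : Submodule F (Fin n → F)} (h : C ≤ D) : dualH q n D ≤ dualH q n C :=
  fun _ hx y hy => hx y (h hy)

theorem mem_dualH_span_iff (σ : F →+* F) (hσ : ∀ a, σ a = a ^ q) {S : Set (Fin n → F)}
    {x : Fin n → F} : x ∈ dualH q n (Submodule.span F S) ↔ ∀ y ∈ S, ∑ i, x i * y i ^ q = 0 := by
  refine ⟨fun h y hy => h y (Submodule.subset_span hy), fun h y hy => ?_⟩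
  simp only [← hσ] at h ⊢
  induction hy using Submodule.span_induction with
  | mem z hz => exact h z hz
  | zero => simp
  | add a b _ _ ha hb => simp [mul_add, sum_add_distrib, ha, hb]
  | smul c a _ ha => simp [mul_left_comm _ (σ c), ← mul_sum, ha]

theorem dualH_span_grsRows (σ : F →+* F) (hσ : ∀ a, σ a = a ^ q) (s : ℕ) (β v : Fin n → F) :
    dualH q n (Submodule.span F (Set.range fun (k : Fin s) j => v j * β j ^ (k : ℕ))) =
      LinearMap.ker (grsCheck s (fun j => β j ^ q) fun j => v j ^ q) := by
  ext x
  rw [mem_dualH_span_iff σ hσ, Set.forall_mem_range, LinearMap.mem_ker, funext_iff]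
  refine forall_congr' fun k => ?_
  rw [grsCheck_apply, Pi.zero_apply]
  exact Eq.congr_left (sum_congr rfl fun j _ => by ring)

theorem exists_dualH_le_of_grsRows_orthogonal (σ : F →+* F) (hσ : ∀ a, σ a = a ^ q) {s : ℕ}
    {β v : Fin n → F} (hβ : Injective β) (hv : ∀ j, v j ≠ 0) (hsn : s < n)
    (horth : ∀ k l : Fin s, ∑ j, v j * β j ^ (k : ℕ) * (v j * β j ^ (l : ℕ)) ^ q = 0) :
    ∃ C : Submodule F (Fin n → F), dualH q n C ≤ C ∧ Module.finrank F C = n - s ∧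
      IsLeast {d : ℕ | ∃ x ∈ C, x ≠ 0 ∧ wt x = d} (s + 1) := by
  set D := Submodule.span F (Set.range fun (k : Fin s) j => v j * β j ^ (k : ℕ))
  have hDC : D ≤ dualH q n D := by
    rw [Submodule.span_le, Set.range_subset_iff]
    exact fun k => (mem_dualH_span_iff σ hσ).2 <| Set.forall_mem_range.2 (horth k)
  have hγ : Injective fun j => β j ^ q := by
    simp_rw [← hσ]; exact σ.injective.comp hβ
  have hw : ∀ j, v j ^ q ≠ 0 := fun j => pow_ne_zero q (hv j)
  refine ⟨dualH q n D, dualH_anti hDC, ?_⟩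
  rw [dualH_span_grsRows σ hσ]
  exact ⟨finrank_ker_grsCheck hγ hw hsn.le, isLeast_wt_ker_grsCheck hγ hw hsn⟩

end HermitianDual

theorem sum_eval_div_prod_sub_eq_zero {F ι : Type*} [Field F] [Fintype ι] [DecidableEq ι]
    {c : ι → F} (hc : Injective c) {P : F[X]} (hP : P.natDegree + 2 ≤ Fintype.card ι) :
    ∑ i, P.eval (c i) / ∏ j ∈ univ.erase i, (c i - c j) = 0 := by
  rw [← Lagrange.coeff_eq_sum hc.injOn, coeff_eq_zero_of_natDegree_lt]
  · rw [card_univ]; omega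
  · refine degree_le_natDegree.trans_lt ?_
    rw [card_univ]
    exact_mod_cast (by omega : P.natDegree < Fintype.card ι)

theorem exists_subfield_natCard_eq {F : Type*} [Field F] [Fintype F] {q : ℕ} (hq : IsPrimePow q)
    (hF : Fintype.card F = q ^ 2) : ∃ K : Subfield F, Nat.card K = q := by
  obtain ⟨p, e, hp, he, rfl⟩ := hq
  rw [← Nat.prime_iff] at hp
  have := Fact.mk hp
  have : CharP F p := charP_of_card_eq_prime_pow (f := e * 2) (by rw [hF, pow_mul])
  let := ZMod.algebra F p
  have hrank : Module.finrank (ZMod p) F = e * 2 := by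
    refine Nat.pow_right_injective hp.two_le ?_
    simp only [FiniteField.pow_finrank_eq_card, hF, pow_mul]
  obtain ⟨φ⟩ := FiniteField.nonempty_algHom_of_finrank_dvd (K := GaloisField p e) (L := F)
    (by rw [GaloisField.finrank p he.ne', hrank]; exact dvd_mul_right e 2)
  refine ⟨φ.toRingHom.fieldRange, ?_⟩
  rw [← GaloisField.card p e he.ne', ← Nat.card_range_of_injective φ.injective]
  rfl

section QuadraticExtension

variable {K F : Type*} [Field K] [Field F] [Algebra K F]

theorem injective_sigma_add_algebraMap {ι : Type*} {κ : ι → Type*} {b : ι → F}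
    (hb : ∀ i j, b i - b j ∈ Set.range (algebraMap K F) → i = j) {c : ∀ i, κ i → K}
    (hc : ∀ i, Injective (c i)) :
    Injective fun a : Σ i, κ i => b a.1 + algebraMap K F (c a.1 a.2) := by
  rintro ⟨i, x⟩ ⟨j, y⟩ h
  obtain rfl : i = j := hb i j ⟨c j y - c i x, by rw [map_sub]; linear_combination h.symm⟩
  obtain rfl : x = y := hc i ((algebraMap K F).injective (add_left_cancel h))
  rfl

variable [Fintype K]

theorem add_algebraMap_pow_card (b : F) (c : K) :
    (b + algebraMap K F c) ^ Fintype.card K = b ^ Fintype.card K + algebraMap K F c := by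
  simpa using map_add (FiniteField.frobeniusAlgHom K F) b (algebraMap K F c)

/-- The norm `v ↦ v ^ (q + 1)` of `F / K` is surjective onto `K`. -/
theorem exists_pow_card_add_one_eq_algebraMap [Fintype F]
    (hF : Fintype.card F = Fintype.card K ^ 2) (u : K) :
    ∃ v : F, v ^ (Fintype.card K + 1) = algebraMap K F u := by
  obtain ⟨v, rfl⟩ := FiniteField.norm_surjective K F u
  refine ⟨v, ?_⟩
  rw [FiniteField.algebraMap_norm_eq_pow, Nat.card_eq_fintype_card, Nat.card_eq_fintype_card, hF]
  have hq : 1 < Fintype.card K := Fintype.one_lt_card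
  have hdiv : (Fintype.card K ^ 2 - 1) / (Fintype.card K - 1) = Fintype.card K + 1 := by
    nth_rw 1 [← one_pow 2]
    rw [Nat.sq_sub_sq, Nat.mul_div_cancel _ (by omega)]
  rw [hdiv]

theorem exists_block_weights [Fintype F] (hF : Fintype.card F = Fintype.card K ^ 2) {ι : Type*}
    [Fintype ι] [DecidableEq ι] {c : ι → K} (hc : Injective c) (b : F) {s : ℕ}
    (hs : 2 * s ≤ Fintype.card ι) :
    ∃ v : ι → F, (∀ x, v x ≠ 0) ∧ ∀ k l : Fin s, ∑ x, v x * (b + algebraMap K F (c x)) ^ (k : ℕ) *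
      (v x * (b + algebraMap K F (c x)) ^ (l : ℕ)) ^ Fintype.card K = 0 := by
  set q := Fintype.card K
  set c' : ι → F := fun x => algebraMap K F (c x)
  have hu : ∀ x, ∏ y ∈ univ.erase x, (c x - c y) ≠ 0 := fun x =>
    prod_ne_zero_iff.2 fun y hy => sub_ne_zero.2 (hc.ne (ne_of_mem_erase hy).symm)
  choose v hv using fun x =>
    exists_pow_card_add_one_eq_algebraMap hF (∏ y ∈ univ.erase x, (c x - c y))⁻¹
  refine ⟨v, fun x hx => ?_, fun k l => ?_⟩
  · have := hv x
    rw [hx, zero_pow (Nat.succ_ne_zero q), eq_comm, map_eq_zero] at this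
    exact inv_ne_zero (hu x) this
  set P : F[X] := (X + C b) ^ (k : ℕ) * (X + C (b ^ q)) ^ (l : ℕ)
  have hP : P.natDegree + 2 ≤ Fintype.card ι := by
    have : P.natDegree ≤ k + l :=
      natDegree_mul_le.trans (by rw [natDegree_pow_X_add_C, natDegree_pow_X_add_C])
    omega
  -- The Frobenius fixes `c' x`, so each summand is a Lagrange weight times `P (c' x)`.
  have hterm : ∀ x, v x * (b + c' x) ^ (k : ℕ) * (v x * (b + c' x) ^ (l : ℕ)) ^ q =
      P.eval (c' x) / ∏ y ∈ univ.erase x, (c' x - c' y) := fun x =>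
    calc _ = v x ^ (q + 1) * (b + c' x) ^ (k : ℕ) * ((b + c' x) ^ q) ^ (l : ℕ) := by ring
      _ = _ := by
        rw [hv x, add_algebraMap_pow_card, map_inv₀, map_prod]
        simp [P, c', div_eq_inv_mul, add_comm, mul_assoc, q]
  rw [sum_congr rfl fun x _ => hterm x]
  exact sum_eval_div_prod_sub_eq_zero ((algebraMap K F).injective.comp hc) hP

theorem exists_offsets_sub_notMem_range [Fintype F] (hKF : Fintype.card K < Fintype.card F)
    {t : ℕ} (ht : t ≤ Fintype.card K) :
    ∃ b : Fin t → F, ∀ i j, b i - b j ∈ Set.range (algebraMap K F) → i = j := by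
  obtain ⟨θ, hθ⟩ : ∃ θ : F, θ ∉ Set.range (algebraMap K F) := by
    by_contra! h
    exact hKF.not_ge (Fintype.card_le_of_surjective _ fun x => h x)
  set a : Fin t → K := (Fintype.equivFin K).symm ∘ Fin.castLE ht
  have ha : Injective a := (Fintype.equivFin K).symm.injective.comp (Fin.castLE_injective ht)
  refine ⟨fun i => θ * algebraMap K F (a i), fun i j ⟨z, hz⟩ => by_contra fun hij => hθ ?_⟩
  have hne : algebraMap K F (a i) - algebraMap K F (a j) ≠ 0 :=
    sub_ne_zero.2 ((algebraMap K F).injective.ne (ha.ne hij))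
  refine ⟨z / (a i - a j), ?_⟩
  rw [map_div₀, map_sub, hz, div_eq_iff hne]
  ring

theorem exists_orthogonal_grsRows [Fintype F] (hF : Fintype.card F = Fintype.card K ^ 2)
    {t : ℕ} (ht : t ≤ Fintype.card K) {m : Fin t → ℕ} (hm : ∀ i, m i ≤ Fintype.card K) {s : ℕ}
    (hs : ∀ i, 2 * s ≤ m i) :
    ∃ β v : Fin (∑ i, m i) → F, Injective β ∧ (∀ j, v j ≠ 0) ∧
      ∀ k l : Fin s, ∑ j, v j * β j ^ (k : ℕ) * (v j * β j ^ (l : ℕ)) ^ Fintype.card K = 0 := by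
  have hKF : Fintype.card K < Fintype.card F := by
    rw [hF]
    exact lt_self_pow₀ Fintype.one_lt_card one_lt_two
  obtain ⟨b, hb⟩ := exists_offsets_sub_notMem_range hKF ht
  set c : ∀ i, Fin (m i) → K := fun i => (Fintype.equivFin K).symm ∘ Fin.castLE (hm i)
  have hc : ∀ i, Injective (c i) := fun i =>
    (Fintype.equivFin K).symm.injective.comp (Fin.castLE_injective (hm i))
  choose v hv horth using fun i =>
    exists_block_weights hF (hc i) (b i) (s := s) (by simpa using hs i)
  set e := (finSigmaFinEquiv (n := m)).symm
  refine ⟨fun j => b (e j).1 + algebraMap K F (c _ (e j).2), fun j => v _ (e j).2,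
    (injective_sigma_add_algebraMap hb hc).comp e.injective, fun j => hv _ _, fun k l => ?_⟩
  rw [e.sum_comp (fun a => v a.1 a.2 * (b a.1 + algebraMap K F (c a.1 a.2)) ^ (k : ℕ) *
    (v a.1 a.2 * (b a.1 + algebraMap K F (c a.1 a.2)) ^ (l : ℕ)) ^ Fintype.card K),
    Fintype.sum_sigma]
  exact sum_eq_zero fun i _ => horth i k l

end QuadraticExtension

theorem stmt_14_general (q : ℕ) (hpp : IsPrimePow q)
    (F : Type*) [Field F] [Fintype F] (hF : Fintype.card F = q ^ 2)
    (n : ℕ) (hn2 : 2 ≤ n) (t : ℕ) (ht2 : t ≤ q)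
    (ni : Fin t → ℕ) (hniq : ∀ i, ni i ≤ q)
    (hsum : n = ∑ i, ni i) (s : ℕ) (hs2 : ∀ i, s ≤ ni i / 2) :
    ∃ C : Submodule F (Fin (n) → F),
      dualH q (n) C ≤ C ∧
      Module.finrank F C = (n) - s ∧
      IsLeast {d : ℕ | ∃ x ∈ C, x ≠ 0 ∧ wt x = d} (s + 1) := by
  have hs : ∀ i, 2 * s ≤ ni i := fun i => by have := hs2 i; omega
  have hsn : s < n := by
    obtain _ | t := t
    · simp [hsum] at hn2
    have := (hs 0).trans (hsum ▸ single_le_sum (fun i _ => Nat.zero_le (ni i)) (mem_univ 0))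
    omega
  obtain ⟨K, hK⟩ := exists_subfield_natCard_eq hpp hF
  have : Fintype K := Fintype.ofFinite K
  rw [Nat.card_eq_fintype_card] at hK
  subst hK hsum
  obtain ⟨β, v, hβ, hv, horth⟩ := exists_orthogonal_grsRows hF ht2 hniq hs
  exact exists_dualH_le_of_grsRows_orthogonal (FiniteField.frobeniusAlgHom K F).toRingHom
    (fun _ => rfl) hβ hv hsn horth

/-- for 2 ≤ n ≤ q², writing n = n₁ + ⋯ + n_t with 1 ≤ t ≤ q and
2 ≤ nᵢ ≤ q, and 1 ≤ s ≤ min{n₁,…,n_t}/2, there exists an [n, n−s, s+1]_{q²}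
Hermitian dual-containing code. -/
theorem stmt_14 (q : ℕ) (hpp : IsPrimePow q)
    (F : Type*) [Field F] [Fintype F] (hF : Fintype.card F = q ^ 2)
    (n : ℕ) (hn2 : 2 ≤ n) (hnq : n ≤ q ^ 2) (t : ℕ) (ht1 : 1 ≤ t) (ht2 : t ≤ q)
    (ni : Fin t → ℕ) (hni2 : ∀ i, 2 ≤ ni i) (hniq : ∀ i, ni i ≤ q)
    (hsum : n = ∑ i, ni i) (s : ℕ) (hs1 : 1 ≤ s) (hs2 : ∀ i, s ≤ ni i / 2) :
    ∃ C : Submodule F (Fin (n) → F),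
      dualH q (n) C ≤ C ∧
      Module.finrank F C = (n) - s ∧
      IsLeast {d : ℕ | ∃ x ∈ C, x ≠ 0 ∧ wt x = d} (s + 1) :=
  stmt_14_general q hpp F hF n hn2 t ht2 ni hniq hsum s hs2
end

section
/- Let q be a prime power, 1 ≤ k < n ≤ q², and let C = GRS_k(a,v) ⊆ 𝔽_{q²}^n be a generalized Reed–Solomon code with pairwise distinct a_j and nonzero v_j, satisfying C^{⊥H} ⊆ C. Let w ∈ 𝔽_{q²}^n be a nonzero vector with Σ_j w_j v_j a_j^l = 0 for all 0 ≤ l ≤ n−2. Fix an integer t_0 with (n−k)/2 ≤ t_0 < n−k and put t_1 = n − k − t_0. For 0 ≤ i < t_0 define g_i ∈ 𝔽_{q²}[D]^n by (g_i)_j = w_j a_j^i + (w_j a_j^{t_0+i})·D if i < t_1, and (g_i)_j = w_j a_j^i if t_1 ≤ i < t_0. Let V be the 𝔽_{q²}[D]-submodule of 𝔽_{q²}[D]^n generated by g_0,…,g_{t_0−1}. Then V ⊆ V^{⊥H}, i.e., for all u, x ∈ V one has Σ_{m≥0} Σ_{j=0}^{n−1} (coefficient of D^m in u_j)·(coefficient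 of D^m in x_j)^q = 0. -/
open Polynomial

/-- The generalized Reed–Solomon code. -/
noncomputable def grs {F : Type*} [Field F] (n k : ℕ) (a v : Fin n → F) :
    Submodule F (Fin n → F) :=
  (Polynomial.degreeLT F k).map (LinearMap.pi fun i => v i • Polynomial.leval (a i))

/-- The Hermitian pairing ⟨u,x⟩_H = Σ_{m≥0} Σ_j u_{j,m} (x_{j,m})^q on
F_{q²}[D]^n, where u_{j,m} is the coefficient of D^m in the j-th entry of u
(the sum over m has finitely many nonzero terms, supported in the coefficient
support of u). -/
noncomputable def hPair {F : Type*} [Field F] (q : ℕ) {n : ℕ}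
    (u x : Fin n → Polynomial F) : F :=
  ∑ j, ∑ m ∈ (u j).support, (u j).coeff m * ((x j).coeff m) ^ q

/-- The weight of u ∈ F_{q²}[D]^n: the total number of nonzero coefficients in
its n polynomial entries. -/
noncomputable def wtP {F : Type*} [Field F] {n : ℕ} (u : Fin n → Polynomial F) : ℕ :=
  ∑ j, (u j).support.card

/-!
Every coefficient vector of a generator `g i` is zero or a parity-check row
`h_α = (w_j a_j^α)_j` with `α < n - k`. By the relations on `w` and a degree count, `h_α` is
Euclidean-orthogonal to `C`, so its Frobenius image `h_α^q` lies in `C^{⊥H} ⊆ C`; hence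
`Σ_j h_α j * (h_β j)^q = 0` for all `α, β < n - k`. The pairing is sesquilinear over `F`, and
over `F` the module `V` is spanned by the shifts `D^m • g i`, whose coefficient vectors are again
such rows or zero.
-/

open scoped Pointwise

theorem LinearMap.eq_zero_of_mem_span₂ {R M P : Type*} [CommSemiring R]
    [AddCommMonoid M] [Module R M] [AddCommMonoid P] [Module R P] {σ : R →+* R}
    (B : M →ₗ[R] M →ₛₗ[σ] P) {s : Set M}
    (h : ∀ x ∈ s, ∀ y ∈ s, B x y = 0) {x y : M}
    (hx : x ∈ Submodule.span R s) (hy : y ∈ Submodule.span R s) : B x y = 0 := by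
  induction hx, hy using Submodule.span_induction₂ with
  | mem_mem x y hx hy => exact h x hx y hy
  | _ => simp_all

theorem FiniteField.exists_ringHom_pow_eq_of_dvd_card {F : Type*} [Field F] [Fintype F] {q : ℕ}
    (hq : q ∣ Fintype.card F) : ∃ σ : F →+* F, ∀ x, σ x = x ^ q := by
  obtain ⟨p, _, m, hp, hcard⟩ := FiniteField.card' F
  have : Fact p.Prime := ⟨hp⟩
  obtain ⟨i, -, rfl⟩ := (Nat.dvd_prime_pow hp).mp (hcard ▸ hq)
  exact ⟨iterateFrobenius F p i, fun _ => rfl⟩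

theorem Polynomial.span_range_X_pow_eq_top (R : Type*) [CommSemiring R] :
    Submodule.span R (Set.range fun m : ℕ => (X : R[X]) ^ m) = ⊤ := by
  simpa [coe_basisMonomials, ← X_pow_eq_monomial] using (basisMonomials R).span_eq

section HermitianPairing

variable {F : Type*} [Field F] {q n : ℕ}

theorem hPair_eq_sum_polynomial_sum (u x : Fin n → F[X]) :
    hPair q u x = ∑ j, (u j).sum fun m c => c * (x j).coeff m ^ q := rfl

theorem hPair_add_left (u u' x : Fin n → F[X]) :
    hPair q (u + u') x = hPair q u x + hPair q u' x := by
  simp only [hPair_eq_sum_polynomial_sum, Pi.add_apply, ← Finset.sum_add_distrib]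
  exact Finset.sum_congr rfl fun j _ => sum_add_index _ _ _ (fun _ => zero_mul _)
    fun _ _ _ => add_mul _ _ _

theorem hPair_smul_left (c : F) (u x : Fin n → F[X]) :
    hPair q (c • u) x = c * hPair q u x := by
  simp only [hPair_eq_sum_polynomial_sum, Pi.smul_apply, Finset.mul_sum]
  refine Finset.sum_congr rfl fun j _ => ?_
  rw [sum_smul_index _ _ _ fun _ => zero_mul _, Polynomial.sum_def, Polynomial.sum_def,
    Finset.mul_sum]
  simp only [mul_assoc]

variable {σ : F →+* F}

theorem hPair_add_right (hσ : ∀ y, σ y = y ^ q) (u x x' : Fin n → F[X]) :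
    hPair q u (x + x') = hPair q u x + hPair q u x' := by
  simp only [hPair, ← Finset.sum_add_distrib, ← hσ, Pi.add_apply, coeff_add, map_add, mul_add]

theorem hPair_smul_right (hσ : ∀ y, σ y = y ^ q) (c : F) (u x : Fin n → F[X]) :
    hPair q u (c • x) = σ c * hPair q u x := by
  simp only [hPair, Finset.mul_sum, ← hσ, Pi.smul_apply, coeff_smul, smul_eq_mul, map_mul]
  exact Finset.sum_congr rfl fun j _ => Finset.sum_congr rfl fun m _ => mul_left_comm _ _ _

variable (σ) in
noncomputable def hPairₛₗ (hσ : ∀ y, σ y = y ^ q) :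
    (Fin n → F[X]) →ₗ[F] (Fin n → F[X]) →ₛₗ[σ] F :=
  LinearMap.mk₂'ₛₗ (RingHom.id F) σ (hPair q) hPair_add_left hPair_smul_left
    (hPair_add_right hσ) (hPair_smul_right hσ)

theorem hPair_eq_zero_of_forall_coeff {u x : Fin n → F[X]}
    (h : ∀ m, ∑ j, (u j).coeff m * (x j).coeff m ^ q = 0) : hPair q u x = 0 := by
  classical
  let T := Finset.univ.biUnion fun j => (u j).support
  have hT : hPair q u x = ∑ j, ∑ m ∈ T, (u j).coeff m * (x j).coeff m ^ q := by
    refine Finset.sum_congr rfl fun j _ => Finset.sum_subset ?_ fun m _ hm => ?_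
    · exact Finset.subset_biUnion_of_mem (fun j => (u j).support) (Finset.mem_univ j)
    · rw [notMem_support_iff.mp hm, zero_mul]
  rw [hT, Finset.sum_comm]
  exact Finset.sum_eq_zero fun m _ => h m

theorem hPair_X_pow_smul_eq_zero (hσ : ∀ y, σ y = y ^ q) {u x : Fin n → F[X]}
    (h : ∀ r s, ∑ j, (u j).coeff r * (x j).coeff s ^ q = 0) (a b : ℕ) :
    hPair q ((X : F[X]) ^ a • u) ((X : F[X]) ^ b • x) = 0 := by
  refine hPair_eq_zero_of_forall_coeff fun m => ?_
  simp only [Pi.smul_apply, smul_eq_mul, coeff_X_pow_mul']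
  by_cases ha : a ≤ m
  · by_cases hb : b ≤ m
    · simpa only [if_pos ha, if_pos hb] using h (m - a) (m - b)
    · simp [if_neg hb, ← hσ]
  · simp [if_neg ha]

end HermitianPairing

section GRS

variable {F : Type*} [Field F] {n k : ℕ} {a v w : Fin n → F}

theorem sum_mul_eq_zero_of_mem_grs {N α : ℕ} (hw : ∀ l < N, ∑ j, w j * v j * a j ^ l = 0)
    (hα : α + k ≤ N) {y : Fin n → F} (hy : y ∈ grs n k a v) :
    ∑ j, w j * a j ^ α * y j = 0 := by
  obtain ⟨f, hf, rfl⟩ := Submodule.mem_map.mp hy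
  have hsupp : ∀ m ∈ f.support, m < k := fun m hm => by
    exact_mod_cast (le_degree_of_mem_supp m hm).trans_lt (mem_degreeLT.mp hf)
  calc ∑ j, w j * a j ^ α * (v j * f.eval (a j))
      = ∑ m ∈ f.support, f.coeff m * ∑ j, w j * v j * a j ^ (α + m) := by
        simp only [eval_eq_sum, Polynomial.sum_def, Finset.mul_sum]
        rw [Finset.sum_comm]
        refine Finset.sum_congr rfl fun m _ => Finset.sum_congr rfl fun j _ => ?_
        ring
    _ = 0 := Finset.sum_eq_zero fun m hm => by
        rw [hw _ (by have := hsupp m hm; omega), mul_zero]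

theorem pow_mem_dualH {q : ℕ} {σ : F →+* F} (hσ : ∀ y, σ y = y ^ q)
    {C : Submodule F (Fin n → F)} {x : Fin n → F} (hx : ∀ y ∈ C, ∑ j, x j * y j = 0) :
    (fun j => x j ^ q) ∈ dualH q n C := fun y hy => by
  simp only [← hσ, ← map_mul, ← map_sum, hx y hy, map_zero]

theorem sum_mul_pow_eq_zero_of_dualH_le {q : ℕ} {σ : F →+* F} (hσ : ∀ y, σ y = y ^ q)
    (hC : dualH q n (grs n k a v) ≤ grs n k a v) {N α β : ℕ}
    (hw : ∀ l < N, ∑ j, w j * v j * a j ^ l = 0) (hα : α + k ≤ N) (hβ : β + k ≤ N) :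
    ∑ j, w j * a j ^ α * (w j * a j ^ β) ^ q = 0 :=
  sum_mul_eq_zero_of_mem_grs hw hα <| hC <|
    pow_mem_dualH hσ fun _ => sum_mul_eq_zero_of_mem_grs hw hβ

end GRS

theorem coeff_eq_zero_or_eq_row {F : Type*} [Field F] {n t0 t1 : ℕ} {a w : Fin n → F}
    {g : Fin t0 → Fin n → F[X]}
    (hg : ∀ i j, g i j =
      if (i : ℕ) < t1 then C (w j * a j ^ (i : ℕ)) + C (w j * a j ^ (t0 + (i : ℕ))) * X
      else C (w j * a j ^ (i : ℕ)))
    (i : Fin t0) (r : ℕ) :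
    (∀ j, (g i j).coeff r = 0) ∨ ∃ α < t0 + t1, ∀ j, (g i j).coeff r = w j * a j ^ α := by
  have hcoeff : ∀ j, (g i j).coeff r = (if r = 0 then w j * a j ^ (i : ℕ) else 0) +
      if (i : ℕ) < t1 ∧ r = 1 then w j * a j ^ (t0 + (i : ℕ)) else 0 := fun j => by
    rw [hg]
    split_ifs <;> simp only [coeff_add, coeff_C, coeff_C_mul_X] <;> split_ifs <;> simp_all
  rcases r with _ | _ | r
  · exact .inr ⟨i, by omega, fun j => by simp [hcoeff]⟩
  · by_cases hi : (i : ℕ) < t1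
    · exact .inr ⟨t0 + i, by omega, fun j => by simp [hcoeff, hi]⟩
    · exact .inl fun j => by simp [hcoeff, hi]
  · exact .inl fun j => by simp [hcoeff]

theorem stmt_15_general (q : ℕ)
    (F : Type*) [Field F] [Fintype F] (hF : Fintype.card F = q ^ 2)
    (n k : ℕ)
    (a v : Fin n → F)
    (hC : dualH q n (grs n k a v) ≤ grs n k a v)
    (w : Fin n → F)
    (hw : ∀ l : ℕ, l ≤ n - 2 → ∑ j, w j * v j * a j ^ l = 0)
    (t0 t1 : ℕ) (ht0b : t0 < n - k) (ht1 : t1 = n - k - t0)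
    (g : Fin t0 → Fin n → Polynomial F)
    (hg : ∀ i j, g i j =
      if (i : ℕ) < t1 then
        Polynomial.C (w j * a j ^ (i : ℕ)) +
          Polynomial.C (w j * a j ^ (t0 + (i : ℕ))) * Polynomial.X
      else Polynomial.C (w j * a j ^ (i : ℕ)))
    (V : Submodule (Polynomial F) (Fin n → Polynomial F))
    (hV : V = Submodule.span (Polynomial F) (Set.range g)) :
    ∀ u ∈ V, ∀ x ∈ V, hPair q u x = 0 := by
  obtain ⟨σ, hσ⟩ :=
    FiniteField.exists_ringHom_pow_eq_of_dvd_card (hF ▸ dvd_pow_self q two_ne_zero)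
  have hrows : ∀ α < n - k, ∀ β < n - k, ∑ j, w j * a j ^ α * (w j * a j ^ β) ^ q = 0 :=
    fun α hα β hβ => sum_mul_pow_eq_zero_of_dualH_le hσ hC (N := n - 1)
      (fun l hl => hw l (by omega)) (by omega) (by omega)
  have hcoeff : ∀ i i' r s, ∑ j, (g i j).coeff r * (g i' j).coeff s ^ q = 0 := by
    intro i i' r s
    rcases coeff_eq_zero_or_eq_row hg i r with h | ⟨α, hα, h⟩
    · simp [h]
    rcases coeff_eq_zero_or_eq_row hg i' s with h' | ⟨β, hβ, h'⟩
    · simp [h', ← hσ]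
    · simpa only [h, h'] using hrows α (by omega) β (by omega)
  have hspan : ∀ y ∈ V,
      y ∈ Submodule.span F (Set.range (fun m : ℕ => (X : F[X]) ^ m) • Set.range g) := by
    rw [Submodule.span_smul_of_span_eq_top (span_range_X_pow_eq_top F), hV]
    exact fun y hy => hy
  intro u hu x hx
  refine (hPairₛₗ σ hσ).eq_zero_of_mem_span₂ ?_ (hspan u hu) (hspan x hx)
  rintro _ ⟨_, ⟨m, rfl⟩, _, ⟨i, rfl⟩, rfl⟩ _ ⟨_, ⟨m', rfl⟩, _, ⟨i', rfl⟩, rfl⟩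
  exact hPair_X_pow_smul_eq_zero hσ (hcoeff i i') m m'

/-- for a Hermitian dual-containing GRS code, the convolutional
code V generated by the rows g_i of G(D) = H̃₀ + H̃₁ D (obtained by splitting
the parity check matrix into its first t₀ rows and remaining t₁ = n−k−t₀ rows,
(n−k)/2 ≤ t₀ < n−k) is self-orthogonal for the Hermitian pairing: V ⊆ V^{⊥H}. -/
theorem stmt_15 (q : ℕ) (hpp : IsPrimePow q)
    (F : Type*) [Field F] [Fintype F] (hF : Fintype.card F = q ^ 2)
    (n k : ℕ) (hk : 1 ≤ k) (hkn : k < n) (hn : n ≤ q ^ 2)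
    (a v : Fin n → F) (ha : Function.Injective a) (hv : ∀ i, v i ≠ 0)
    (hC : dualH q n (grs n k a v) ≤ grs n k a v)
    (w : Fin n → F) (hw0 : w ≠ 0)
    (hw : ∀ l : ℕ, l ≤ n - 2 → ∑ j, w j * v j * a j ^ l = 0)
    (t0 t1 : ℕ) (ht0a : n - k ≤ 2 * t0) (ht0b : t0 < n - k) (ht1 : t1 = n - k - t0)
    (g : Fin t0 → Fin n → Polynomial F)
    (hg : ∀ i j, g i j =
      if (i : ℕ) < t1 then
        Polynomial.C (w j * a j ^ (i : ℕ)) +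
          Polynomial.C (w j * a j ^ (t0 + (i : ℕ))) * Polynomial.X
      else Polynomial.C (w j * a j ^ (i : ℕ)))
    (V : Submodule (Polynomial F) (Fin n → Polynomial F))
    (hV : V = Submodule.span (Polynomial F) (Set.range g)) :
    ∀ u ∈ V, ∀ x ∈ V, hPair q u x = 0 :=
  stmt_15_general q F hF n k a v hC w hw t0 t1 ht0b ht1 g hg V hV
end
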